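/- The family of multiplicatively piecewise syndetic subsets of ℕ is strongly partition regular: if A is multiplicatively piecewise syndetic and A = C₁ ∪ … ∪ C_r, then some Cᵢ is multiplicatively piecewise syndetic. -/

import Mathlib

/-!
A set `A` is multiplicatively piecewise syndetic exactly when, for some `k`, the set of `x` with
`x * i ∈ A` for some `1 ≤ i ≤ k` is multiplicatively thick. Suppose `C ∪ D` has this property with
bound `k` but `C` fails it with bound `k`, witnessed by a finite set `F`: every `x` has some
`f ∈ F` for which no `x * f * i` with `i ≤ k` lies in `C`. Thickness for `C ∪ D` on the products
`e * f` then puts some `x * e * f * i` into `D`, so `D` has the property with bound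
`(max F) * k`. Induction on the number of cells finishes the proof.
-/

def MulThick (T : Set ℕ) : Prop :=
  ∀ F : Finset ℕ, (∀ f ∈ F, 0 < f) → ∃ x : ℕ, 0 < x ∧ ∀ f ∈ F, x * f ∈ T

def MulSyndetic (A : Set ℕ) : Prop :=
  ∃ k : ℕ, 0 < k ∧ ∀ x : ℕ, 0 < x → ∃ i : ℕ, 1 ≤ i ∧ i ≤ k ∧ x * i ∈ A

/-- `A` is multiplicatively piecewise syndetic: it is the intersection of a
multiplicatively syndetic set with a multiplicatively thick set. -/
def MulPiecewiseSyndetic (A : Set ℕ) : Prop :=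
  ∃ S T : Set ℕ, MulSyndetic S ∧ MulThick T ∧ A = S ∩ T

open Pointwise

def mulFattening (k : ℕ) (A : Set ℕ) : Set ℕ := {x | ∃ i : ℕ, 1 ≤ i ∧ i ≤ k ∧ x * i ∈ A}

theorem mulFattening_diff_subset {k : ℕ} {A C D : Set ℕ} (h : A ⊆ C ∪ D) :
    mulFattening k A \ mulFattening k C ⊆ mulFattening k D := by
  rintro x ⟨⟨i, hi₁, hik, hiA⟩, hxC⟩
  exact ⟨i, hi₁, hik, (h hiA).resolve_left fun hiC => hxC ⟨i, hi₁, hik, hiC⟩⟩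

theorem mem_mulFattening_of_mul_mem {k m x j : ℕ} {A : Set ℕ}
    (h : x * j ∈ mulFattening k A) (hj₁ : 1 ≤ j) (hjm : j ≤ m) : x ∈ mulFattening (m * k) A := by
  obtain ⟨i, hi₁, hik, hA⟩ := h
  exact ⟨j * i, Nat.one_le_iff_ne_zero.mpr (by positivity), Nat.mul_le_mul hjm hik,
    by rwa [← mul_assoc]⟩

theorem MulSyndetic.mono {S S' : Set ℕ} (hS : MulSyndetic S) (h : S ⊆ S') : MulSyndetic S' := by
  obtain ⟨k, hk, hS⟩ := hS
  refine ⟨k, hk, fun x hx => ?_⟩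
  obtain ⟨i, hi₁, hik, hiS⟩ := hS x hx
  exact ⟨i, hi₁, hik, h hiS⟩

theorem MulThick.mono {T T' : Set ℕ} (hT : MulThick T) (h : T ⊆ T') : MulThick T' := by
  intro F hF
  obtain ⟨x, hx, hxT⟩ := hT F hF
  exact ⟨x, hx, fun f hf => h (hxT f hf)⟩

theorem MulThick.nonempty {T : Set ℕ} (hT : MulThick T) : T.Nonempty := by
  obtain ⟨x, -, hx⟩ := hT {1} (by simp)
  exact ⟨x * 1, hx 1 (Finset.mem_singleton_self 1)⟩

theorem MulThick.exists_forall_mul_mul_mem {T : Set ℕ} (hT : MulThick T) {E F : Finset ℕ}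
    (hE : ∀ e ∈ E, 0 < e) (hF : ∀ f ∈ F, 0 < f) :
    ∃ x, 0 < x ∧ ∀ e ∈ E, ∀ f ∈ F, x * e * f ∈ T := by
  have hEF : ∀ g ∈ E * F, 0 < g := by
    intro g hg
    obtain ⟨e, he, f, hf, rfl⟩ := Finset.mem_mul.mp hg
    exact Nat.mul_pos (hE e he) (hF f hf)
  obtain ⟨x, hx, hxT⟩ := hT (E * F) hEF
  exact ⟨x, hx, fun e he f hf => by simpa only [mul_assoc] using hxT _ (Finset.mul_mem_mul he hf)⟩

theorem mulPiecewiseSyndetic_of_inter_subset {S T A : Set ℕ} (hS : MulSyndetic S)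
    (hT : MulThick T) (h : S ∩ T ⊆ A) : MulPiecewiseSyndetic A := by
  refine ⟨S ∪ A, T ∪ A, hS.mono Set.subset_union_left, hT.mono Set.subset_union_left, ?_⟩
  rw [← Set.inter_union_distrib_right, Set.union_eq_self_of_subset_left h]

theorem mulPiecewiseSyndetic_iff_exists_mulThick_mulFattening {A : Set ℕ} :
    MulPiecewiseSyndetic A ↔ ∃ k, MulThick (mulFattening k A) := by
  constructor
  · rintro ⟨S, T, ⟨k, -, hS⟩, hT, rfl⟩
    refine ⟨k, fun F hF => ?_⟩
    obtain ⟨x, hx, hxT⟩ := hT.exists_forall_mul_mul_mem hF (F := Finset.Icc 1 k)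
      fun i hi => (Finset.mem_Icc.mp hi).1
    refine ⟨x, hx, fun f hf => ?_⟩
    obtain ⟨i, hi₁, hik, hiS⟩ := hS (x * f) (Nat.mul_pos hx (hF f hf))
    exact ⟨i, hi₁, hik, hiS, hxT f hf i (Finset.mem_Icc.mpr ⟨hi₁, hik⟩)⟩
  · rintro ⟨k, hk⟩
    -- `1 ≤ k` because the thick set `mulFattening k A` is nonempty
    obtain ⟨-, i, hi₁, hik, -⟩ := hk.nonempty
    refine mulPiecewiseSyndetic_of_inter_subset (S := A ∪ (mulFattening k A)ᶜ) ?_ hk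
      fun x ⟨hxS, hxT⟩ => hxS.resolve_right (not_not_intro hxT)
    refine ⟨k, by omega, fun x _ => ?_⟩
    by_cases hx : x ∈ mulFattening k A
    · obtain ⟨i, hi₁, hik, hiA⟩ := hx
      exact ⟨i, hi₁, hik, Or.inl hiA⟩
    · exact ⟨1, le_rfl, by omega, Or.inr (by simpa using hx)⟩

theorem MulPiecewiseSyndetic.nonempty {A : Set ℕ} (hA : MulPiecewiseSyndetic A) : A.Nonempty := by
  obtain ⟨k, hk⟩ := mulPiecewiseSyndetic_iff_exists_mulThick_mulFattening.mp hA
  obtain ⟨x, i, -, -, hi⟩ := hk.nonempty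
  exact ⟨x * i, hi⟩

theorem MulPiecewiseSyndetic.or_of_union {C D : Set ℕ} (h : MulPiecewiseSyndetic (C ∪ D)) :
    MulPiecewiseSyndetic C ∨ MulPiecewiseSyndetic D := by
  simp only [mulPiecewiseSyndetic_iff_exists_mulThick_mulFattening] at h ⊢
  obtain ⟨k, hk⟩ := h
  refine or_iff_not_imp_left.mpr fun hC => ?_
  have hCk : ¬ MulThick (mulFattening k C) := fun h => hC ⟨k, h⟩
  simp only [MulThick, not_forall, not_exists, not_and] at hCk
  obtain ⟨F, hF, hFC⟩ := hCk
  refine ⟨F.sup id * k, fun E hE => ?_⟩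
  obtain ⟨x, hx, hxCD⟩ := hk.exists_forall_mul_mul_mem hE hF
  refine ⟨x, hx, fun e he => ?_⟩
  obtain ⟨f, hf, hfC⟩ := hFC (x * e) (Nat.mul_pos hx (hE e he))
  exact mem_mulFattening_of_mul_mem (mulFattening_diff_subset subset_rfl ⟨hxCD e he f hf, hfC⟩)
    (hF f hf) (Finset.le_sup (f := id) hf)

theorem MulPiecewiseSyndetic.exists_of_biUnion {ι : Type*} {C : ι → Set ℕ} (s : Finset ι)
    (h : MulPiecewiseSyndetic (⋃ i ∈ s, C i)) : ∃ i ∈ s, MulPiecewiseSyndetic (C i) := by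
  classical
  induction s using Finset.induction_on with
  | empty => simpa using h.nonempty
  | insert a s _ ih =>
    rw [Finset.set_biUnion_insert] at h
    rcases h.or_of_union with ha | hs
    · exact ⟨a, Finset.mem_insert_self a s, ha⟩
    · obtain ⟨i, hi, hCi⟩ := ih hs
      exact ⟨i, Finset.mem_insert_of_mem hi, hCi⟩

theorem mulPiecewiseSyndetic_strongly_partition_regular_general
    (A : Set ℕ) (hA : MulPiecewiseSyndetic A) (r : ℕ) (C : Fin r → Set ℕ)
    (hcover : A = ⋃ i, C i) :
    ∃ i, MulPiecewiseSyndetic (C i) := by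
  subst hcover
  simpa using MulPiecewiseSyndetic.exists_of_biUnion (C := C) Finset.univ (by simpa using hA)

/-- Strong partition regularity of multiplicatively piecewise syndetic sets. -/
theorem mulPiecewiseSyndetic_strongly_partition_regular
    (A : Set ℕ) (hA : MulPiecewiseSyndetic A) (r : ℕ) (C : Fin r → Set ℕ)
    (hcover : A = ⋃ i, C i)
    (hdisj : ∀ i j, i ≠ j → C i ∩ C j = ∅) :
    ∃ i, MulPiecewiseSyndetic (C i) :=
  mulPiecewiseSyndetic_strongly_partition_regular_general A hA r C hcover
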